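/- arXiv:0812.4770 — 3 statements merged into one kernel-verified Lean document; each statement's English description precedes it below -/
import Mathlib

section
/- Let N ≥ 1 and let (p_n)_{n≥0} be real polynomials satisfying the (2N+1)-term recurrence x^N·p_n(x) = c_{n,0}·p_n(x) + Σ_{k=1}^{N} (c_{n,−k}·p_{n−k}(x) + c_{n,k}·p_{n+k}(x)) for all n ≥ 0, where the c_{n,k} are real numbers and p_j = 0 for j < 0. Then the associated N×N matrix polynomials satisfy the three-term recurrence x·P_n(x) = A_n·P_{n+1}(x) + B_n·P_n(x) + C_n·P_{n−1}(x) for all n ≥ 0 (with P_{−1} = 0), where for 0 ≤ i,j ≤ N−1 the block entries are (A_n)_{ij} = c_{nN+i, N+j−i}, (B_n)_{ij} = c_{nN+i, j−i}, (C_n)_{ij} = c_{nN+i, −N+j−i}, with the convention that c_{r,k} = 0 whenever |k| > N. -/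
open Polynomial

/-- The splitting operator `R_{N,m}`: the coefficient of `x^n` in `RNm N m p`
is the coefficient of `x^{nN+m}` in `p`. -/
noncomputable def RNm (N m : ℕ) (p : ℝ[X]) : ℝ[X] :=
  ∑ n ∈ Finset.range (p.natDegree + 1), C (p.coeff (n * N + m)) * X ^ n

/-- The `N×N` matrix polynomials associated to a sequence of scalar polynomials:
the `(i,j)` entry of `P_n` is `R_{N,j}(p_{nN+i})`. -/
noncomputable def matPoly (N : ℕ) (p : ℕ → ℝ[X]) (n : ℕ) :
    Matrix (Fin N) (Fin N) ℝ[X] :=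
  Matrix.of fun i j : Fin N => RNm N (j : ℕ) (p (n * N + (i : ℕ)))

lemma coeff_RNm {N : ℕ} (hN : 1 ≤ N) (m : ℕ) (p : ℝ[X]) (t : ℕ) :
    (RNm N m p).coeff t = p.coeff (t * N + m) := by
  unfold RNm
  rw [Polynomial.finset_sum_coeff]
  simp only [Polynomial.coeff_C_mul, Polynomial.coeff_X_pow, mul_ite, mul_one, mul_zero]
  rw [Finset.sum_ite_eq (Finset.range (p.natDegree + 1)) t (fun n => p.coeff (n * N + m))]
  split_ifs with h
  · rfl
  · symm
    apply Polynomial.coeff_eq_zero_of_natDegree_lt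
    simp only [Finset.mem_range, not_lt] at h
    have : t ≤ t * N := Nat.le_mul_of_pos_right t hN
    omega

lemma RNm_zero {N : ℕ} (m : ℕ) : RNm N m 0 = 0 := by
  simp [RNm]

lemma RNm_add {N : ℕ} (hN : 1 ≤ N) (m : ℕ) (q r : ℝ[X]) :
    RNm N m (q + r) = RNm N m q + RNm N m r := by
  ext t; simp [coeff_RNm hN]

lemma RNm_C_mul {N : ℕ} (hN : 1 ≤ N) (m : ℕ) (a : ℝ) (q : ℝ[X]) :
    RNm N m (C a * q) = C a * RNm N m q := by
  ext t; simp [coeff_RNm hN]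

lemma RNm_sum {N : ℕ} (hN : 1 ≤ N) (m : ℕ) {α : Type*} (s : Finset α) (f : α → ℝ[X]) :
    RNm N m (∑ a ∈ s, f a) = ∑ a ∈ s, RNm N m (f a) := by
  ext t; simp [coeff_RNm hN, Polynomial.finset_sum_coeff]

lemma RNm_X_pow_mul {N m : ℕ} (hN : 1 ≤ N) (hm : m < N) (q : ℝ[X]) :
    RNm N m (X ^ N * q) = X * RNm N m q := by
  ext t
  cases t with
  | zero =>
    rw [coeff_RNm hN]
    simp only [zero_mul, zero_add]
    rw [mul_comm (X ^ N) q, Polynomial.coeff_mul_X_pow']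
    rw [if_neg (by omega)]
    simp [Polynomial.mul_coeff_zero]
  | succ t =>
    rw [coeff_RNm hN, Polynomial.coeff_X_mul, coeff_RNm hN]
    have h : (t + 1) * N + m = t * N + m + N := by ring
    rw [h, Polynomial.coeff_X_pow_mul]

/-- The generic summand: coefficient `c M d` times the split of `p (M + d)` (or `0` if
`M + d < 0`). -/
noncomputable def Tg (N j : ℕ) (p : ℕ → ℝ[X]) (c : ℕ → ℤ → ℝ) (M : ℕ) (d : ℤ) : ℝ[X] :=
  C (c M d) * RNm N j (if 0 ≤ (M : ℤ) + d then p ((M : ℤ) + d).toNat else 0)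

section TgLemmas

variable {N j : ℕ} {p : ℕ → ℝ[X]} {c : ℕ → ℤ → ℝ} {M : ℕ}

lemma Tg_eq (d : ℤ) (r : ℕ) (h : (M : ℤ) + d = r) :
    Tg N j p c M d = C (c M d) * RNm N j (p r) := by
  unfold Tg
  have ht : ((M : ℤ) + d).toNat = r := by omega
  rw [if_pos (by omega), ht]

lemma Tg_neg (k : ℕ) :
    Tg N j p c M (-((k : ℤ) + 1)) =
      C (c M (-((k : ℤ) + 1))) * RNm N j (if k + 1 ≤ M then p (M - (k + 1)) else 0) := by
  unfold Tg
  by_cases h : k + 1 ≤ M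
  · rw [if_pos (by omega : (0:ℤ) ≤ (M : ℤ) + -((k : ℤ) + 1)), if_pos h]
    have ht : ((M : ℤ) + -((k : ℤ) + 1)).toNat = M - (k + 1) := by omega
    rw [ht]
  · rw [if_neg (by omega), if_neg h]

lemma Tg_zero_of_c (d : ℤ) (h : c M d = 0) : Tg N j p c M d = 0 := by
  simp [Tg, h]

lemma Tg_zero_of_neg (d : ℤ) (h : (M : ℤ) + d < 0) : Tg N j p c M d = 0 := by
  rw [Tg, if_neg (by omega), RNm_zero, mul_zero]

end TgLemmas

lemma sum_range_int {β : Type*} [AddCommMonoid β] (f : ℤ → β) (a : ℤ) (n : ℕ) :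
    ∑ l ∈ Finset.range n, f (a + l) = ∑ d ∈ Finset.Ico a (a + n), f d := by
  induction n with
  | zero => simp
  | succ n ih =>
    rw [Finset.sum_range_succ, ih]
    have h2 : Finset.Ico a (a + (n + 1 : ℕ)) = insert (a + n) (Finset.Ico a (a + n)) := by
      ext x
      simp only [Finset.mem_Ico, Finset.mem_insert]
      push_cast
      omega
    rw [h2, Finset.sum_insert (by simp)]
    exact add_comm _ _

lemma sum_Ico_consec {β : Type*} [AddCommMonoid β] (f : ℤ → β) {a b c : ℤ}
    (h1 : a ≤ b) (h2 : b ≤ c) :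
    ∑ d ∈ Finset.Ico a b, f d + ∑ d ∈ Finset.Ico b c, f d = ∑ d ∈ Finset.Ico a c, f d := by
  rw [← Finset.sum_union (Finset.Ico_disjoint_Ico_consecutive a b c),
    Finset.Ico_union_Ico_eq_Ico h1 h2]

theorem stmt1 (N : ℕ) (hN : 1 ≤ N) (p : ℕ → ℝ[X]) (c : ℕ → ℤ → ℝ)
    (hc : ∀ (r : ℕ) (k : ℤ), (N : ℤ) < |k| → c r k = 0)
    (hrec : ∀ n : ℕ, X ^ N * p n =
      C (c n 0) * p n + ∑ k ∈ Finset.range N,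
        (C (c n (-((k : ℤ) + 1))) * (if k + 1 ≤ n then p (n - (k + 1)) else 0)
          + C (c n ((k : ℤ) + 1)) * p (n + (k + 1))))
    (A B Cmat : ℕ → Matrix (Fin N) (Fin N) ℝ[X])
    (hA : ∀ (n : ℕ) (i j : Fin N),
      A n i j = C (c (n * N + (i : ℕ)) ((N : ℤ) + (j : ℕ) - (i : ℕ))))
    (hB : ∀ (n : ℕ) (i j : Fin N),
      B n i j = C (c (n * N + (i : ℕ)) (((j : ℕ) : ℤ) - (i : ℕ))))
    (hC : ∀ (n : ℕ) (i j : Fin N),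
      Cmat n i j = C (c (n * N + (i : ℕ)) (-(N : ℤ) + (j : ℕ) - (i : ℕ)))) :
    ∀ n : ℕ, (X : ℝ[X]) • matPoly N p n =
      A n * matPoly N p (n + 1) + B n * matPoly N p n
        + Cmat n * (if n = 0 then 0 else matPoly N p (n - 1)) := by
  intro n
  -- the key identity for the left-hand side entries
  have key : ∀ (i j : Fin N), (X : ℝ[X]) * RNm N (j : ℕ) (p (n * N + (i : ℕ))) =
      ∑ d ∈ Finset.Ico (-(N : ℤ)) ((N : ℤ) + 1), Tg N (j : ℕ) p c (n * N + (i : ℕ)) d := by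
    intro i j
    set M : ℕ := n * N + (i : ℕ) with hM
    rw [← RNm_X_pow_mul hN j.isLt, hrec M, RNm_add hN, RNm_C_mul hN, RNm_sum hN]
    have hterm : ∀ k ∈ Finset.range N,
        RNm N (j : ℕ) (C (c M (-((k : ℤ) + 1))) * (if k + 1 ≤ M then p (M - (k + 1)) else 0)
          + C (c M ((k : ℤ) + 1)) * p (M + (k + 1)))
        = Tg N (j : ℕ) p c M (-((k : ℤ) + 1)) + Tg N (j : ℕ) p c M ((k : ℤ) + 1) := by
      intro k _
      rw [RNm_add hN, RNm_C_mul hN, RNm_C_mul hN, Tg_neg,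
        Tg_eq ((k : ℤ) + 1) (M + (k + 1)) (by push_cast; ring)]
    rw [Finset.sum_congr rfl hterm, Finset.sum_add_distrib]
    have h0 : C (c M 0) * RNm N (j : ℕ) (p M) = Tg N (j : ℕ) p c M 0 :=
      (Tg_eq 0 M (by omega)).symm
    have hneg : ∑ k ∈ Finset.range N, Tg N (j : ℕ) p c M (-((k : ℤ) + 1)) =
        ∑ d ∈ Finset.Ico (-(N : ℤ)) 0, Tg N (j : ℕ) p c M d := by
      have e : ∑ d ∈ Finset.Ico (-(N : ℤ)) 0, Tg N (j : ℕ) p c M d =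
          ∑ l ∈ Finset.range N, Tg N (j : ℕ) p c M (-(N : ℤ) + l) := by
        rw [sum_range_int (Tg N (j : ℕ) p c M) (-(N : ℤ)) N]
        congr 1
        congr 1
        ring
      rw [e, ← Finset.sum_range_reflect (fun l => Tg N (j : ℕ) p c M (-(N : ℤ) + l)) N]
      apply Finset.sum_congr rfl
      intro k hk
      simp only [Finset.mem_range] at hk
      congr 1
      omega
    have hpos : ∑ k ∈ Finset.range N, Tg N (j : ℕ) p c M ((k : ℤ) + 1) =
        ∑ d ∈ Finset.Ico (1 : ℤ) ((N : ℤ) + 1), Tg N (j : ℕ) p c M d := by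
      calc ∑ k ∈ Finset.range N, Tg N (j : ℕ) p c M ((k : ℤ) + 1)
          = ∑ k ∈ Finset.range N, Tg N (j : ℕ) p c M ((1 : ℤ) + k) := by
            apply Finset.sum_congr rfl; intro k _; congr 1; ring
        _ = ∑ d ∈ Finset.Ico (1 : ℤ) (1 + (N : ℤ)), Tg N (j : ℕ) p c M d :=
            sum_range_int (Tg N (j : ℕ) p c M) 1 N
        _ = ∑ d ∈ Finset.Ico (1 : ℤ) ((N : ℤ) + 1), Tg N (j : ℕ) p c M d := by
            rw [add_comm (1 : ℤ) (N : ℤ)]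
    rw [h0, hneg, hpos]
    have A1 : ∑ d ∈ Finset.Ico (-(N : ℤ)) 0, Tg N (j : ℕ) p c M d
        + ∑ d ∈ Finset.Ico (0 : ℤ) ((N : ℤ) + 1), Tg N (j : ℕ) p c M d
        = ∑ d ∈ Finset.Ico (-(N : ℤ)) ((N : ℤ) + 1), Tg N (j : ℕ) p c M d :=
      by apply sum_Ico_consec <;> omega
    have A2 : ∑ d ∈ Finset.Ico (0 : ℤ) 1, Tg N (j : ℕ) p c M d
        + ∑ d ∈ Finset.Ico (1 : ℤ) ((N : ℤ) + 1), Tg N (j : ℕ) p c M d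
        = ∑ d ∈ Finset.Ico (0 : ℤ) ((N : ℤ) + 1), Tg N (j : ℕ) p c M d :=
      by apply sum_Ico_consec <;> omega
    have A3 : ∑ d ∈ Finset.Ico (0 : ℤ) 1, Tg N (j : ℕ) p c M d = Tg N (j : ℕ) p c M 0 := by
      have : Finset.Ico (0 : ℤ) 1 = {0} := by ext x; simp; omega
      rw [this, Finset.sum_singleton]
    rw [← A1, ← A2, A3]
    abel
  -- block sums as interval sums
  have hblock : ∀ (i j : Fin N) (a b : ℤ) (F : Fin N → ℝ[X]), b = a + N →
      (∀ l : Fin N, F l = Tg N (j : ℕ) p c (n * N + (i : ℕ)) (a + (l : ℕ))) →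
      ∑ l : Fin N, F l = ∑ d ∈ Finset.Ico a b, Tg N (j : ℕ) p c (n * N + (i : ℕ)) d := by
    intro i j a b F hb hF
    subst hb
    rw [Finset.sum_congr rfl (fun l _ => hF l),
      ← sum_range_int (Tg N (j : ℕ) p c (n * N + (i : ℕ))) a N]
    exact Fin.sum_univ_eq_sum_range (fun l : ℕ => Tg N (j : ℕ) p c (n * N + (i : ℕ)) (a + l)) N
  rcases eq_or_ne n 0 with rfl | hn
  · -- case n = 0
    rw [if_pos rfl, Matrix.mul_zero, add_zero]
    refine Matrix.ext fun i j => ?_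
    simp only [Matrix.smul_apply, Matrix.add_apply, Matrix.mul_apply, matPoly,
      Matrix.of_apply, smul_eq_mul]
    rw [key i j]
    have hAsum : ∑ l : Fin N, A 0 i l * RNm N (j : ℕ) (p ((0 + 1) * N + (l : ℕ))) =
        ∑ d ∈ Finset.Ico ((N : ℤ) - i) (2 * N - i), Tg N (j : ℕ) p c (0 * N + (i : ℕ)) d := by
      apply hblock i j _ _ _ (by ring)
      intro l
      rw [hA, Tg_eq ((N : ℤ) - i + l) ((0 + 1) * N + (l : ℕ)) (by push_cast; ring)]
      have : (N : ℤ) + (l : ℕ) - (i : ℕ) = (N : ℤ) - i + l := by ring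
      rw [this]
    have hBsum : ∑ l : Fin N, B 0 i l * RNm N (j : ℕ) (p (0 * N + (l : ℕ))) =
        ∑ d ∈ Finset.Ico (-(i : ℤ)) ((N : ℤ) - i), Tg N (j : ℕ) p c (0 * N + (i : ℕ)) d := by
      apply hblock i j _ _ _ (by ring)
      intro l
      rw [hB, Tg_eq (-(i : ℤ) + l) (0 * N + (l : ℕ)) (by push_cast; ring)]
      have : ((l : ℕ) : ℤ) - (i : ℕ) = -(i : ℤ) + l := by ring
      rw [this]
    rw [hAsum, hBsum]
    have hi : (i : ℕ) < N := i.isLt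
    have comb : ∑ d ∈ Finset.Ico ((N : ℤ) - i) (2 * N - i), Tg N (j : ℕ) p c (0 * N + (i : ℕ)) d
        + ∑ d ∈ Finset.Ico (-(i : ℤ)) ((N : ℤ) - i), Tg N (j : ℕ) p c (0 * N + (i : ℕ)) d
        = ∑ d ∈ Finset.Ico (-(i : ℤ)) (2 * N - i), Tg N (j : ℕ) p c (0 * N + (i : ℕ)) d := by
      rw [add_comm]
      apply sum_Ico_consec <;> omega
    rw [comb]
    have e1 : ∑ d ∈ Finset.Ico (-(N : ℤ)) ((N : ℤ) + 1), Tg N (j : ℕ) p c (0 * N + (i : ℕ)) d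
        = ∑ d ∈ Finset.Ico (-(i : ℤ)) ((N : ℤ) + 1), Tg N (j : ℕ) p c (0 * N + (i : ℕ)) d := by
      symm
      apply Finset.sum_subset
      · intro x hx
        simp only [Finset.mem_Ico] at hx ⊢
        omega
      · intro x hx hnx
        simp only [Finset.mem_Ico, not_and, not_lt] at hx hnx
        apply Tg_zero_of_neg
        push_cast
        omega
    have e2 : ∑ d ∈ Finset.Ico (-(i : ℤ)) (2 * N - i), Tg N (j : ℕ) p c (0 * N + (i : ℕ)) d
        = ∑ d ∈ Finset.Ico (-(i : ℤ)) ((N : ℤ) + 1), Tg N (j : ℕ) p c (0 * N + (i : ℕ)) d := by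
      symm
      apply Finset.sum_subset
      · intro x hx
        simp only [Finset.mem_Ico] at hx ⊢
        omega
      · intro x hx hnx
        simp only [Finset.mem_Ico, not_and, not_lt] at hx hnx
        exact Tg_zero_of_c x (hc _ x (by rw [lt_abs]; omega))
    rw [e1, e2]
  · -- case n ≥ 1
    obtain ⟨m, rfl⟩ : ∃ m, n = m + 1 := ⟨n - 1, by omega⟩
    rw [if_neg (by omega)]
    refine Matrix.ext fun i j => ?_
    simp only [Matrix.smul_apply, Matrix.add_apply, Matrix.mul_apply, matPoly,
      Matrix.of_apply, smul_eq_mul, Nat.add_sub_cancel]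
    rw [key i j]
    have hi : (i : ℕ) < N := i.isLt
    have hAsum : ∑ l : Fin N, A (m + 1) i l * RNm N (j : ℕ) (p ((m + 1 + 1) * N + (l : ℕ))) =
        ∑ d ∈ Finset.Ico ((N : ℤ) - i) (2 * N - i),
          Tg N (j : ℕ) p c ((m + 1) * N + (i : ℕ)) d := by
      apply hblock i j _ _ _ (by ring)
      intro l
      rw [hA, Tg_eq ((N : ℤ) - i + l) ((m + 1 + 1) * N + (l : ℕ)) (by push_cast; ring)]
      have : (N : ℤ) + (l : ℕ) - (i : ℕ) = (N : ℤ) - i + l := by ring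
      rw [this]
    have hBsum : ∑ l : Fin N, B (m + 1) i l * RNm N (j : ℕ) (p ((m + 1) * N + (l : ℕ))) =
        ∑ d ∈ Finset.Ico (-(i : ℤ)) ((N : ℤ) - i),
          Tg N (j : ℕ) p c ((m + 1) * N + (i : ℕ)) d := by
      apply hblock i j _ _ _ (by ring)
      intro l
      rw [hB, Tg_eq (-(i : ℤ) + l) ((m + 1) * N + (l : ℕ)) (by push_cast; ring)]
      have : ((l : ℕ) : ℤ) - (i : ℕ) = -(i : ℤ) + l := by ring
      rw [this]
    have hCsum : ∑ l : Fin N, Cmat (m + 1) i l * RNm N (j : ℕ) (p (m * N + (l : ℕ))) =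
        ∑ d ∈ Finset.Ico (-(N : ℤ) - i) (-(i : ℤ)),
          Tg N (j : ℕ) p c ((m + 1) * N + (i : ℕ)) d := by
      apply hblock i j _ _ _ (by ring)
      intro l
      rw [hC, Tg_eq (-(N : ℤ) - i + l) (m * N + (l : ℕ)) (by push_cast; ring)]
      have : -(N : ℤ) + (l : ℕ) - (i : ℕ) = -(N : ℤ) - i + l := by ring
      rw [this]
    rw [hAsum, hBsum, hCsum]
    have comb1 : ∑ d ∈ Finset.Ico (-(N : ℤ) - i) (-(i : ℤ)),
          Tg N (j : ℕ) p c ((m + 1) * N + (i : ℕ)) d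
        + ∑ d ∈ Finset.Ico (-(i : ℤ)) ((N : ℤ) - i),
          Tg N (j : ℕ) p c ((m + 1) * N + (i : ℕ)) d
        = ∑ d ∈ Finset.Ico (-(N : ℤ) - i) ((N : ℤ) - i),
          Tg N (j : ℕ) p c ((m + 1) * N + (i : ℕ)) d :=
      by apply sum_Ico_consec <;> omega
    have comb2 : ∑ d ∈ Finset.Ico (-(N : ℤ) - i) ((N : ℤ) - i),
          Tg N (j : ℕ) p c ((m + 1) * N + (i : ℕ)) d
        + ∑ d ∈ Finset.Ico ((N : ℤ) - i) (2 * N - i),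
          Tg N (j : ℕ) p c ((m + 1) * N + (i : ℕ)) d
        = ∑ d ∈ Finset.Ico (-(N : ℤ) - i) (2 * N - i),
          Tg N (j : ℕ) p c ((m + 1) * N + (i : ℕ)) d :=
      by apply sum_Ico_consec <;> omega
    have trim : ∑ d ∈ Finset.Ico (-(N : ℤ)) ((N : ℤ) + 1),
          Tg N (j : ℕ) p c ((m + 1) * N + (i : ℕ)) d
        = ∑ d ∈ Finset.Ico (-(N : ℤ) - i) (2 * N - i),
          Tg N (j : ℕ) p c ((m + 1) * N + (i : ℕ)) d := by
      apply Finset.sum_subset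
      · intro x hx
        simp only [Finset.mem_Ico] at hx ⊢
        omega
      · intro x hx hnx
        simp only [Finset.mem_Ico, not_and, not_lt] at hx hnx
        exact Tg_zero_of_c x (hc _ x (by rw [lt_abs]; omega))
    rw [trim, ← comb2, ← comb1]
    abel
end

section
/- For every real polynomial f and every integer l ≥ 1, the l-th derivative of the polynomial g(x) = f(x²) satisfies g^{(l)}(x) = Σ_{k=⌈l/2⌉}^{l} b_{k,l}(x)·f^{(k)}(x²). -/
open Polynomial

/-- The polynomial `b_{k,l}(x)` from the paper:
`b_{k,l}(x) = ((−1)^k/k!)·(Σ_{j=⌈l/2⌉}^{k} (−1)^j·C(k,j)·(2j)(2j−1)⋯(2j−l+1))·x^{2k−l}`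
for `⌈l/2⌉ ≤ k ≤ l`, and `0` otherwise. -/
noncomputable def bkl (k l : ℕ) : ℝ[X] :=
  if (l + 1) / 2 ≤ k ∧ k ≤ l then
    C (((-1 : ℝ) ^ k / (k.factorial : ℝ)) *
        ∑ j ∈ Finset.Icc ((l + 1) / 2) k,
          (-1 : ℝ) ^ j * (k.choose j : ℝ) * ∏ t ∈ Finset.range l, ((2 * j : ℝ) - (t : ℝ)))
      * X ^ (2 * k - l)
  else 0

/-! ### Auxiliary definitions and lemmas -/

/-- The coefficient of `b_{k,l}`, with the inner sum extended over all `j ≤ k`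
(the extra terms vanish). -/
noncomputable def aa (k l : ℕ) : ℝ :=
  ((-1 : ℝ) ^ k / (k.factorial : ℝ)) *
    ∑ j ∈ Finset.range (k + 1),
      (-1 : ℝ) ^ j * (k.choose j : ℝ) * ∏ t ∈ Finset.range l, ((2 * j : ℝ) - (t : ℝ))

lemma prod_zero_of_lt {j l : ℕ} (h : 2 * j < l) :
    ∏ t ∈ Finset.range l, ((2 * j : ℝ) - (t : ℝ)) = 0 :=
  Finset.prod_eq_zero (Finset.mem_range.mpr h) (by push_cast; ring)

lemma aa_low {k l : ℕ} (h : 2 * k < l) : aa k l = 0 := by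
  unfold aa
  rw [Finset.sum_eq_zero, mul_zero]
  intro j hj
  rw [prod_zero_of_lt (by have := Finset.mem_range.mp hj; omega), mul_zero]

lemma fwd_zero (n : ℕ) : (fwdDiff (1:ℕ))^[n] (fun _ : ℕ => (0:ℝ)) = fun _ => 0 := by
  induction n with
  | zero => rfl
  | succ n ih =>
    rw [Function.iterate_succ_apply]
    have : fwdDiff (1:ℕ) (fun _ : ℕ => (0:ℝ)) = fun _ => 0 := by
      funext x; simp [fwdDiff]
    rw [this, ih]

lemma fwd_poly_step (Q : ℝ[X]) :
    fwdDiff (1:ℕ) (fun j : ℕ => Q.eval (j:ℝ)) =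
      fun j : ℕ => (Q.comp (X + C 1) - Q).eval (j:ℝ) := by
  funext j
  simp only [fwdDiff, eval_sub, eval_comp, eval_add, eval_X, eval_C]
  push_cast
  ring_nf

lemma fwd_iter_poly : ∀ (n : ℕ) (Q : ℝ[X]), Q.natDegree < n →
    (fwdDiff (1:ℕ))^[n] (fun j : ℕ => Q.eval (j:ℝ)) = fun _ => 0 := by
  intro n
  induction n with
  | zero => intro Q h; exact absurd h (Nat.not_lt_zero _)
  | succ n ih =>
    intro Q hQ
    rw [Function.iterate_succ_apply, fwd_poly_step]
    by_cases hR : Q.comp (X + C 1) - Q = 0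
    · rw [hR]; simp only [eval_zero]; exact fwd_zero n
    · apply ih
      by_cases h0 : Q.natDegree = 0
      · exfalso
        obtain ⟨c, rfl⟩ := Polynomial.natDegree_eq_zero.mp h0
        simp at hR
      · have hQ0 : Q ≠ 0 := fun h => h0 (by simp [h])
        have hcomp : Q.comp (X + C 1) ≠ 0 :=
          comp_X_add_C_ne_zero_iff.mpr hQ0
        have hdeg : (Q.comp (X + C 1)).degree = Q.degree := by
          rw [degree_eq_natDegree hcomp, degree_eq_natDegree hQ0, natDegree_comp,
            natDegree_X_add_C, mul_one]
        have hlc : (Q.comp (X + C 1)).leadingCoeff = Q.leadingCoeff := by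
          rw [leadingCoeff_comp (by rw [natDegree_X_add_C]; exact one_ne_zero)]
          rw [(monic_X_add_C (1:ℝ)).leadingCoeff, one_pow, mul_one]
        have h1 := degree_sub_lt hdeg hcomp hlc
        have h2 := natDegree_lt_natDegree hR (hdeg ▸ h1)
        omega

lemma alt_sum (k : ℕ) (Q : ℝ[X]) (h : Q.natDegree < k) :
    ∑ j ∈ Finset.range (k+1), (-1:ℝ)^j * (k.choose j : ℝ) * Q.eval (j:ℝ) = 0 := by
  have H : ∑ j ∈ Finset.range (k+1), ((-1 : ℤ) ^ (k - j) * k.choose j) • Q.eval ((j:ℕ):ℝ) = 0 := by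
    have := fwdDiff_iter_eq_sum_shift (1:ℕ) (fun j : ℕ => Q.eval (j:ℝ)) k 0
    rw [fwd_iter_poly k Q h] at this
    simpa using this.symm
  have H2 : ∑ j ∈ Finset.range (k+1), (-1:ℝ)^(k-j) * (k.choose j : ℝ) * Q.eval (j:ℝ) = 0 := by
    rw [← H]
    refine Finset.sum_congr rfl fun j hj => ?_
    rw [zsmul_eq_mul]
    push_cast
    ring
  have key : ∑ j ∈ Finset.range (k+1), (-1:ℝ)^j * (k.choose j : ℝ) * Q.eval (j:ℝ)
      = (-1:ℝ)^k * ∑ j ∈ Finset.range (k+1), (-1:ℝ)^(k-j) * (k.choose j : ℝ) * Q.eval (j:ℝ) := by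
    rw [Finset.mul_sum]
    refine Finset.sum_congr rfl fun j hj => ?_
    have hjk : j ≤ k := Nat.lt_succ_iff.mp (Finset.mem_range.mp hj)
    have hs : (-1:ℝ)^(k-j) * (-1)^j = (-1)^k := by
      rw [← pow_add]; congr 1; omega
    have hs2 : ((-1:ℝ)^(k-j)) * ((-1:ℝ)^(k-j)) = 1 := by
      rw [← pow_add]; exact Even.neg_one_pow ⟨k - j, rfl⟩
    rw [← hs]
    linear_combination (-(-1:ℝ)^j * (k.choose j : ℝ) * Q.eval (j:ℝ)) * hs2
  rw [key, H2, mul_zero]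

lemma aa_high {k l : ℕ} (h : l < k) : aa k l = 0 := by
  unfold aa
  rw [Finset.sum_congr rfl (fun j (_ : j ∈ Finset.range (k+1)) => rfl), mul_eq_zero]
  right
  set Q : ℝ[X] := ∏ t ∈ Finset.range l, (C 2 * X - C (t:ℝ)) with hQ
  have hev : ∀ j : ℕ, Q.eval (j:ℝ) = ∏ t ∈ Finset.range l, ((2 * j : ℝ) - (t : ℝ)) := by
    intro j; simp [hQ, eval_prod]
  have hfac : ∀ t : ℕ, (C 2 * X - C (t:ℝ)).natDegree = 1 := by
    intro t
    rw [sub_eq_add_neg, ← C_neg]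
    exact natDegree_linear two_ne_zero
  have hdeg : Q.natDegree = l := by
    rw [hQ, natDegree_prod]
    · rw [Finset.sum_congr rfl (fun t _ => hfac t), Finset.sum_const, smul_eq_mul, mul_one,
        Finset.card_range]
    · intro t _ h0
      have := hfac t
      rw [h0] at this
      simp at this
  have := alt_sum k Q (by omega)
  rw [Finset.sum_congr rfl (fun j _ => by rw [hev j])] at this
  exact this

lemma aa_rec (k l : ℕ) :
    aa (k+1) (l+1) = (2*(k:ℝ) + 2 - l) * aa (k+1) l + 2 * aa k l := by
  have hext : ∑ j ∈ Finset.range (k+2),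
        (-1:ℝ)^j * (k.choose j : ℝ) * ∏ t ∈ Finset.range l, ((2 * j : ℝ) - (t : ℝ))
      = ∑ j ∈ Finset.range (k+1),
        (-1:ℝ)^j * (k.choose j : ℝ) * ∏ t ∈ Finset.range l, ((2 * j : ℝ) - (t : ℝ)) := by
    rw [Finset.sum_range_succ]
    simp [Nat.choose_succ_self]
  have hs : ∑ j ∈ Finset.range (k+2),
        (-1:ℝ)^j * ((k+1).choose j : ℝ) * ∏ t ∈ Finset.range (l+1), ((2 * j : ℝ) - (t : ℝ))
      = (2*(k:ℝ) + 2 - l) * ∑ j ∈ Finset.range (k+2),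
          (-1:ℝ)^j * ((k+1).choose j : ℝ) * ∏ t ∈ Finset.range l, ((2 * j : ℝ) - (t : ℝ))
        - (2*((k:ℝ)+1)) * ∑ j ∈ Finset.range (k+2),
          (-1:ℝ)^j * (k.choose j : ℝ) * ∏ t ∈ Finset.range l, ((2 * j : ℝ) - (t : ℝ)) := by
    rw [Finset.mul_sum, Finset.mul_sum, ← Finset.sum_sub_distrib]
    refine Finset.sum_congr rfl fun j hj => ?_
    have hj' : j ≤ k + 1 := Nat.lt_succ_iff.mp (Finset.mem_range.mp hj)
    have hid : (k.choose j : ℝ) * ((k:ℝ)+1) = ((k+1).choose j : ℝ) * ((k:ℝ)+1-(j:ℝ)) := by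
      have h := congrArg (Nat.cast : ℕ → ℝ) (Nat.choose_mul_succ_eq k j)
      push_cast [Nat.cast_sub hj'] at h
      linarith [h]
    rw [Finset.prod_range_succ]
    linear_combination (2 * (-1:ℝ)^j * (∏ t ∈ Finset.range l, ((2 * j : ℝ) - (t : ℝ)))) * hid
  unfold aa
  rw [hs, hext, Nat.factorial_succ]
  have h1 : ((k.factorial : ℕ):ℝ) ≠ 0 := Nat.cast_ne_zero.mpr k.factorial_ne_zero
  push_cast
  field_simp
  ring

/-- `b_{k,l}` with coefficient `aa k l`, meaningful for all `k`, `l`. -/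
noncomputable def cc (k l : ℕ) : ℝ[X] := C (aa k l) * X ^ (2 * k - l)

lemma key (k l : ℕ) (hl : 1 ≤ l) :
    cc (k+1) (l+1) = derivative (cc (k+1) l) + (C 2 * X) * cc k l := by
  unfold cc
  by_cases h1 : l ≤ 2 * k
  · have e1 : 2 * (k+1) - (l+1) = (2*k - l) + 1 := by omega
    have e2 : 2 * (k+1) - l = (2*k - l) + 2 := by omega
    have hc : (((2*k - l : ℕ) : ℝ)) = 2*(k:ℝ) - l := by
      push_cast [Nat.cast_sub h1]; ring
    rw [e1, e2, aa_rec, derivative_C_mul, derivative_X_pow]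
    have : (((2*k-l) + 2 : ℕ) : ℝ) = 2*(k:ℝ) + 2 - l := by push_cast [Nat.cast_sub h1]; ring
    rw [show ((2*k-l) + 2) - 1 = (2*k-l)+1 from rfl, this]
    rw [C_add, C_mul, C_mul]
    ring_nf
  · push_neg at h1
    have h0 : aa k l = 0 := aa_low (by omega)
    by_cases h2 : l = 2*k + 1
    · subst h2
      have e1 : 2 * (k+1) - (2*k+1+1) = 0 := by omega
      have e2 : 2 * (k+1) - (2*k+1) = 1 := by omega
      have e3 : 2 * k - (2*k+1) = 0 := by omega
      rw [e1, e2, e3, aa_rec, h0]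
      have : (2*(k:ℝ) + 2 - ((2*k+1 : ℕ):ℝ)) = 1 := by push_cast; ring
      rw [this]
      simp
    · have h3 : 2*k + 2 ≤ l := by omega
      have ha1 : aa (k+1) (l+1) = 0 := aa_low (by omega)
      rw [ha1, h0]
      by_cases h4 : l = 2*k + 2
      · subst h4
        have e2 : 2 * (k+1) - (2*k+2) = 0 := by omega
        rw [e2]
        simp
      · have ha2 : aa (k+1) l = 0 := aa_low (by omega)
        rw [ha2]
        simp

lemma aa_one_one : aa 1 1 = 2 := by
  unfold aa
  norm_num [Finset.sum_range_succ, Finset.prod_range_succ]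

lemma main' (f : ℝ[X]) : ∀ l : ℕ, 1 ≤ l →
    derivative^[l] (f.comp (X^2)) =
      ∑ k ∈ Finset.range (l+1), cc k l * (derivative^[k] f).comp (X^2) := by
  intro l
  induction l with
  | zero => intro h; exact absurd h (by norm_num)
  | succ l ih =>
    intro _
    by_cases hl : 1 ≤ l
    · have IH := ih hl
      have hc0 : cc 0 (l+1) = 0 := by
        unfold cc; rw [aa_low (by omega)]; simp
      have hd0 : derivative (cc 0 l) = 0 := by
        unfold cc; rw [aa_low (by omega)]; simp
      have hdl : derivative (cc (l+1) l) = 0 := by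
        unfold cc; rw [aa_high (by omega)]; simp
      have hterm : ∀ k ∈ Finset.range (l+1),
          derivative (cc k l * (derivative^[k] f).comp (X^2))
          = derivative (cc k l) * (derivative^[k] f).comp (X^2)
            + cc k l * ((C 2 * X) * (derivative^[k+1] f).comp (X^2)) := by
        intro k _
        rw [derivative_mul, derivative_comp, derivative_X_pow, Function.iterate_succ_apply']
        norm_num
      have firstsum : ∑ k ∈ Finset.range (l+1),
            derivative (cc (k+1) l) * (derivative^[k+1] f).comp (X^2)
          = ∑ k ∈ Finset.range (l+1),
            derivative (cc k l) * (derivative^[k] f).comp (X^2) := by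
        rw [Finset.sum_range_succ, hdl, zero_mul, add_zero]
        rw [Finset.sum_range_succ'
          (fun k => derivative (cc k l) * (derivative^[k] f).comp (X^2)) l]
        rw [hd0, zero_mul, add_zero]
      have RHS : ∑ k ∈ Finset.range (l+1+1), cc k (l+1) * (derivative^[k] f).comp (X^2)
          = (∑ k ∈ Finset.range (l+1),
              derivative (cc k l) * (derivative^[k] f).comp (X^2))
            + ∑ k ∈ Finset.range (l+1),
              cc k l * ((C 2 * X) * (derivative^[k+1] f).comp (X^2)) := by
        rw [Finset.sum_range_succ'
          (fun k => cc k (l+1) * (derivative^[k] f).comp (X^2)) (l+1)]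
        rw [hc0, zero_mul, add_zero]
        have hsp : ∀ k ∈ Finset.range (l+1),
            cc (k+1) (l+1) * (derivative^[k+1] f).comp (X^2)
            = derivative (cc (k+1) l) * (derivative^[k+1] f).comp (X^2)
              + cc k l * ((C 2 * X) * (derivative^[k+1] f).comp (X^2)) := by
          intro k _
          rw [key k l hl]
          ring
        rw [Finset.sum_congr rfl hsp, Finset.sum_add_distrib, firstsum]
      rw [Function.iterate_succ_apply', IH, derivative_sum,
        Finset.sum_congr rfl hterm, Finset.sum_add_distrib, RHS]
    · have hl0 : l = 0 := by omega
      subst hl0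
      rw [Function.iterate_one]
      rw [derivative_comp, derivative_X_pow]
      rw [Finset.sum_range_succ, Finset.sum_range_succ, Finset.sum_range_zero]
      have hc0 : cc 0 1 = 0 := by
        unfold cc; rw [aa_low (by omega)]; simp
      have hc1 : cc 1 1 = C 2 * X := by
        unfold cc; rw [aa_one_one]; norm_num
      rw [hc0, hc1, Function.iterate_one]
      norm_num

lemma bkl_eq_cc {k l : ℕ} (h1 : (l + 1) / 2 ≤ k) (h2 : k ≤ l) : bkl k l = cc k l := by
  unfold bkl cc aa
  rw [if_pos ⟨h1, h2⟩]
  congr 2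
  congr 1
  apply Finset.sum_subset
  · intro j hj
    rw [Finset.mem_Icc] at hj
    exact Finset.mem_range.mpr (by omega)
  · intro j hj hnot
    rw [Finset.mem_range] at hj
    rw [Finset.mem_Icc] at hnot
    have : 2 * j < l := by omega
    rw [prod_zero_of_lt this, mul_zero]

lemma sum_Icc_eq (l : ℕ) (g : ℕ → ℝ[X]) :
    ∑ k ∈ Finset.Icc ((l+1)/2) l, bkl k l * g k
      = ∑ k ∈ Finset.range (l+1), cc k l * g k := by
  apply Finset.sum_subset_zero_on_sdiff
  · intro k hk
    rw [Finset.mem_Icc] at hk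
    exact Finset.mem_range.mpr (by omega)
  · intro k hk
    rw [Finset.mem_sdiff, Finset.mem_range, Finset.mem_Icc] at hk
    have : 2 * k < l := by omega
    unfold cc
    rw [aa_low this]
    simp
  · intro k hk
    rw [Finset.mem_Icc] at hk
    rw [bkl_eq_cc hk.1 hk.2]

theorem stmt3 (f : ℝ[X]) (l : ℕ) (hl : 1 ≤ l) :
    derivative^[l] (f.comp (X ^ 2)) =
      ∑ k ∈ Finset.Icc ((l + 1) / 2) l, bkl k l * (derivative^[k] f).comp (X ^ 2) := by
  rw [sum_Icc_eq l (fun k => (derivative^[k] f).comp (X ^ 2))]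
  exact main' f l hl
end

section
/- Let α be a real number and let L^α_{n,2×2} denote the 2×2 matrix polynomials associated with the monic Laguerre polynomials (L^α_n) via the N = 2 splitting. Then for all n ≥ 0: (L^α_{n,2×2})''(x)·[[0, 4x],[4x², 0]] + (L^α_{n,2×2})'(x)·[[−2x, 2α+4],[(8+2α)x, −2x]] + L^α_{n,2×2}(x)·[[0, 0],[α+1, −1]] = [[−2n, 0],[0, −2n−1]]·L^α_{n,2×2}(x). -/
open Polynomial

/-- Entrywise `k`-th derivative of a `2×2` matrix of polynomials. -/
noncomputable def matDeriv (k : ℕ) (P : Matrix (Fin 2) (Fin 2) ℝ[X]) :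
    Matrix (Fin 2) (Fin 2) ℝ[X] :=
  Matrix.of fun i j => derivative^[k] (P i j)

/-- Monic Laguerre polynomials: `L_{-1} = 0`, `L_0 = 1`,
`L_n(x) = (x − (2n−1+α))·L_{n−1}(x) − (n−1)(n−1+α)·L_{n−2}(x)`. -/
noncomputable def Lag (α : ℝ) : ℕ → ℝ[X]
  | 0 => 1
  | 1 => X - C (1 + α)
  | (n + 2) => (X - C (2 * ((n : ℝ) + 2) - 1 + α)) * Lag α (n + 1)
      - C (((n : ℝ) + 1) * (((n : ℝ) + 1) + α)) * Lag α n


lemma lagDeriv (α : ℝ) : ∀ n : ℕ, X * derivative (Lag α (n+1))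
    = C ((n:ℝ)+1) * Lag α (n+1) + C (((n:ℝ)+1)*(((n:ℝ)+1)+α)) * Lag α n := by
  intro n
  induction n using Nat.twoStepInduction with
  | zero => simp [Lag]
  | one =>
      show X * derivative (Lag α 2) = _
      simp only [Lag, derivative_sub, derivative_mul, derivative_X, derivative_C,
        derivative_one, derivative_natCast, derivative_ofNat, map_zero, map_add, map_sub, map_mul, map_one, map_ofNat, C_eq_natCast,
        Nat.cast_zero, Nat.cast_one]
      push_cast
      ring
  | more n ih1 ih2 =>
      show X * derivative (Lag α (n+3)) = _
      have h3 : Lag α (n+3) = (X - C (2 * (((n:ℝ)+1) + 2) - 1 + α)) * Lag α (n + 2)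
          - C ((((n : ℝ)+1) + 1) * ((((n : ℝ)+1) + 1) + α)) * Lag α (n+1) := by
        show Lag α ((n+1)+2) = _
        simp only [Lag]; push_cast; ring_nf
      have h2 : Lag α (n+2) = (X - C (2 * ((n:ℝ) + 2) - 1 + α)) * Lag α (n + 1)
          - C (((n : ℝ) + 1) * (((n : ℝ) + 1) + α)) * Lag α n := rfl
      rw [h3]
      simp only [derivative_sub, derivative_mul, derivative_X, derivative_C,
        derivative_one, derivative_natCast, derivative_ofNat, map_zero, map_add, map_sub, map_mul, map_one, map_ofNat, C_eq_natCast]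
        at ih1 ih2 h2 ⊢
      have e2 : X * derivative (Lag α (n+2)) = ((n:ℝ[X]) + 1 + 1) * Lag α (n+2) + ((n:ℝ[X]) + 1 + 1) * ((n:ℝ[X]) + 1 + 1 + C α) * Lag α (n + 1) := by push_cast at ih2 ⊢; exact ih2
      push_cast at ih1 e2 h2 ⊢
      linear_combination (X - (2 * (((n:ℝ[X]))+3) - 1 + C α)) * e2
        - ((((n : ℝ[X])) + 2) * ((((n : ℝ[X])) + 2) + C α)) * ih1
        - ((((n : ℝ[X])) + 2) * ((((n : ℝ[X])) + 2) + C α)) * h2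

lemma lagODE (α : ℝ) : ∀ m : ℕ, X * derivative (derivative (Lag α m))
    + (C (α+1) - X) * derivative (Lag α m) + C (m:ℝ) * Lag α m = 0 := by
  intro m
  induction m using Nat.twoStepInduction with
  | zero => simp [Lag]
  | one =>
      show X * derivative (derivative (Lag α 1)) + (C (α+1) - X) * derivative (Lag α 1)
        + C ((1:ℕ):ℝ) * Lag α 1 = 0
      simp only [Lag, derivative_sub, derivative_X, derivative_C, derivative_one,
        map_add, map_sub, map_mul, map_one, map_zero, C_eq_natCast, Nat.cast_one]
      push_cast
      ring
  | more n ih1 ih2 =>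
      have hd := lagDeriv α n
      have e2 : X * derivative (derivative (Lag α (n+1)))
          + (C (α+1) - X) * derivative (Lag α (n+1))
          + ((n:ℝ[X]) + 1) * Lag α (n+1) = 0 := by push_cast at ih2 ⊢; exact_mod_cast ih2
      show X * derivative (derivative (Lag α (n+2))) + (C (α+1) - X) * derivative (Lag α (n+2))
        + C (((n+2:ℕ)):ℝ) * Lag α (n+2) = 0
      have h2 : Lag α (n+2) = (X - C (2 * ((n:ℝ) + 2) - 1 + α)) * Lag α (n + 1)
          - C (((n : ℝ) + 1) * (((n : ℝ) + 1) + α)) * Lag α n := rfl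
      rw [h2]
      simp only [derivative_sub, derivative_mul, derivative_X, derivative_C,
        derivative_one, derivative_natCast, derivative_ofNat, map_zero, map_add, map_sub,
        map_mul, map_one, map_ofNat, C_eq_natCast] at ih1 e2 hd ⊢
      push_cast at ih1 e2 hd ⊢
      linear_combination (X - (2 * ((n:ℝ[X]) + 2) - 1 + C α)) * e2
        - (((n:ℝ[X]) + 1) * (((n:ℝ[X]) + 1) + C α)) * ih1 + 2 * hd

lemma lagCoeff (α : ℝ) (m k : ℕ) :
    ((k:ℝ)+1)*(((k:ℝ)+1)+α) * (Lag α m).coeff (k+1)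
      + ((m:ℝ) - (k:ℝ)) * (Lag α m).coeff k = 0 := by
  have h := lagODE α m
  rw [sub_mul] at h
  cases k with
  | zero =>
      have h0 := congrArg (fun p : ℝ[X] => p.coeff 0) h
      simp only [coeff_add, coeff_sub, mul_coeff_zero, coeff_X_zero, zero_mul,
        coeff_derivative, coeff_C_mul, coeff_C_zero, coeff_zero, Nat.cast_zero, Nat.cast_one] at h0 ⊢
      push_cast at h0 ⊢
      linear_combination h0
  | succ k =>
      have h0 := congrArg (fun p : ℝ[X] => p.coeff (k+1)) h
      simp only [coeff_add, coeff_sub, coeff_X_mul, coeff_derivative, coeff_C_mul,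
        coeff_zero] at h0 ⊢
      push_cast at h0 ⊢
      linear_combination h0


lemma RNm_coeff (N m : ℕ) (hN : 1 ≤ N) (p : ℝ[X]) (k : ℕ) :
    (RNm N m p).coeff k = p.coeff (k * N + m) := by
  unfold RNm
  rw [finset_sum_coeff]
  simp only [coeff_C_mul, coeff_X_pow, mul_ite, mul_one, mul_zero]
  rw [Finset.sum_ite_eq (Finset.range (p.natDegree + 1)) k
    (fun n => p.coeff (n * N + m))]
  split_ifs with h
  · rfl
  · rw [Finset.mem_range, not_lt] at h
    rw [coeff_eq_zero_of_natDegree_lt]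
    calc p.natDegree < k := h
      _ ≤ k * N := Nat.le_mul_of_pos_right k hN
      _ ≤ k * N + m := Nat.le_add_right _ _

lemma entryA (α : ℝ) (m : ℕ) :
    C 4 * (derivative (derivative (RNm 2 1 (Lag α m))) * X^2)
    + C (8+2*α) * (derivative (RNm 2 1 (Lag α m)) * X^1)
    + C (α+1) * RNm 2 1 (Lag α m)
    - C 2 * (derivative (RNm 2 0 (Lag α m)) * X^1)
    + C ((m:ℝ)) * RNm 2 0 (Lag α m) = 0 := by
  rw [Polynomial.ext_iff]
  intro k
  simp only [coeff_add, coeff_sub, coeff_C_mul, coeff_mul_X_pow', coeff_derivative,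
    coeff_zero, RNm_coeff 2 0 (by norm_num), RNm_coeff 2 1 (by norm_num)]
  match k with
  | 0 =>
      norm_num
      linear_combination lagCoeff α m 0
  | 1 =>
      norm_num
      linear_combination lagCoeff α m 2
  | (k+2) =>
      have h2 : 2 ≤ k + 2 := by omega
      have h1 : 1 ≤ k + 2 := by omega
      rw [if_pos h2, if_pos h1, if_pos h1]
      have e1 : k + 2 - 2 = k := by omega
      have e2 : k + 2 - 1 = k + 1 := by omega
      rw [e1, e2]
      push_cast
      have hc := lagCoeff α m (2*k+4)
      push_cast at hc
      have i1 : (k + 1 + 1) * 2 + 1 = 2*k+4+1 := by omega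
      have i2 : (k + 1 + 1) * 2 + 0 = 2*k+4 := by omega
      have i3 : (k + 1) * 2 + 0 = 2*k+2 := by omega
      rw [i1, i2]
      linear_combination hc

lemma entryB (α : ℝ) (m : ℕ) :
    C 4 * (derivative (derivative (RNm 2 0 (Lag α m))) * X^1)
    + C (2*α+4) * derivative (RNm 2 0 (Lag α m))
    - C 2 * (derivative (RNm 2 1 (Lag α m)) * X^1)
    - RNm 2 1 (Lag α m)
    + C ((m:ℝ)) * RNm 2 1 (Lag α m) = 0 := by
  rw [Polynomial.ext_iff]
  intro k
  simp only [coeff_add, coeff_sub, coeff_C_mul, coeff_mul_X_pow', coeff_derivative,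
    coeff_zero, RNm_coeff 2 0 (by norm_num), RNm_coeff 2 1 (by norm_num)]
  match k with
  | 0 =>
      norm_num
      linear_combination lagCoeff α m 1
  | (k+1) =>
      have h1 : 1 ≤ k + 1 := by omega
      rw [if_pos h1, if_pos h1]
      have e2 : k + 1 - 1 = k := by omega
      rw [e2]
      push_cast
      have hc := lagCoeff α m (2*k+3)
      push_cast at hc
      have i1 : (k + 1 + 1) * 2 + 0 = 2*k+3+1 := by omega
      have i2 : (k + 1) * 2 + 1 = 2*k+3 := by omega
      rw [i1, i2]
      linear_combination hc

theorem stmt7 (α : ℝ) (n : ℕ) :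
    matDeriv 2 (matPoly 2 (Lag α) n) *
        (Matrix.of ![![0, 4 * X], ![4 * X ^ 2, 0]] : Matrix (Fin 2) (Fin 2) ℝ[X])
      + matDeriv 1 (matPoly 2 (Lag α) n) *
        (Matrix.of ![![-(2 * X), C (2 * α + 4)], ![C (8 + 2 * α) * X, -(2 * X)]] :
          Matrix (Fin 2) (Fin 2) ℝ[X])
      + matPoly 2 (Lag α) n *
        (Matrix.of ![![0, 0], ![C (α + 1), C (-1)]] : Matrix (Fin 2) (Fin 2) ℝ[X])
      = (Matrix.of ![![C (-(2 * (n : ℝ))), 0], ![0, C (-(2 * (n : ℝ) + 1))]] :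
          Matrix (Fin 2) (Fin 2) ℝ[X]) * matPoly 2 (Lag α) n := by
  ext i j : 2
  simp only [Matrix.add_apply, Matrix.mul_apply, Fin.sum_univ_two, matDeriv, matPoly,
    Matrix.of_apply]
  fin_cases i <;> fin_cases j <;>
    simp only [Matrix.cons_val', Matrix.cons_val_zero, Matrix.cons_val_one,
      Matrix.head_cons, Matrix.head_fin_const, Matrix.empty_val', Matrix.vecHead,
      Matrix.cons_val_fin_one, Fin.isValue, Fin.val_zero, Fin.val_one,
      Fin.mk_zero, Fin.mk_one,
      Function.iterate_succ, Function.iterate_zero, Function.comp_apply, id_eq]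
  · congr 1
    have h := entryA α (n*2)
    simp only [map_add, map_mul, map_neg, map_one, map_ofNat, C_eq_natCast] at h ⊢
    push_cast at h ⊢
    ring_nf at h ⊢
    linear_combination h
  · congr 1
    have h := entryB α (n*2)
    simp only [map_add, map_mul, map_neg, map_one, map_ofNat, C_eq_natCast] at h ⊢
    push_cast at h ⊢
    ring_nf at h ⊢
    linear_combination h
  · congr 1
    have h := entryA α (n*2+1)
    simp only [map_add, map_mul, map_neg, map_one, map_ofNat, C_eq_natCast] at h ⊢
    push_cast at h ⊢
    ring_nf at h ⊢
    linear_combination h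
  · congr 1
    have h := entryB α (n*2+1)
    simp only [map_add, map_mul, map_neg, map_one, map_ofNat, C_eq_natCast] at h ⊢
    push_cast at h ⊢
    ring_nf at h ⊢
    linear_combination h
end
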